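/- arXiv:1612.04200 — 2 statements merged into one kernel-verified Lean document; each statement's English description precedes it below -/
import Mathlib

section
/- Among all probability densities ρ on [1, b) satisfying ∫₁^b ρ(x) ln x dx ≤ (1/2) ln b, the Newcomb–Benford density 1/(x ln b) has maximal differential entropy, with H = ln(ln b) + (1/2) ln b; moreover equality in the entropy bound forces ρ = 1/(x ln b) almost everywhere. -/
/-!
Gibbs' inequality: for densities with `∫ q ≤ ∫ p`, `∫ p log q ≤ ∫ p log p`, because the
difference is `∫ q · klFun (p / q) ≥ 0`, and `klFun` vanishes only at `1`, which gives the
equality case. Take `q` the Benford density `1 / (x log b)`: since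
`log q x = -log x - log (log b)`, the cross entropy `-∫ ρ log q` is
`⟨log x⟩_ρ + log (log b)`, which the constraint bounds by `log (log b) + (log b) / 2`,
the entropy of `q` itself.
-/

open MeasureTheory Real InformationTheory

lemma mul_log_sub_mul_log_add_sub_eq_mul_klFun {p q : ℝ} (hp : 0 ≤ p) (hq : 0 < q) :
    p * log p - p * log q + (q - p) = q * klFun (p / q) := by
  rcases hp.eq_or_lt with rfl | hp
  · simp [klFun_zero]
  · rw [klFun_apply, log_div hp.ne' hq.ne']
    field_simp
    ring

section Gibbs

variable {α : Type*} [MeasurableSpace α] {μ : Measure α} {p q : α → ℝ}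

lemma mul_klFun_div_ae_eq (hp : 0 ≤ᵐ[μ] p) (hq : ∀ᵐ x ∂μ, 0 < q x) :
    (fun x => p x * log (p x) - p x * log (q x) + (q x - p x)) =ᵐ[μ]
      fun x => q x * klFun (p x / q x) := by
  filter_upwards [hp, hq] with x hpx hqx
  exact mul_log_sub_mul_log_add_sub_eq_mul_klFun hpx hqx

lemma mul_klFun_div_ae_nonneg (hp : 0 ≤ᵐ[μ] p) (hq : ∀ᵐ x ∂μ, 0 < q x) :
    0 ≤ᵐ[μ] fun x => q x * klFun (p x / q x) := by
  filter_upwards [hp, hq] with x hpx hqx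
  exact mul_nonneg hqx.le (klFun_nonneg (div_nonneg hpx hqx.le))

variable (hp : 0 ≤ᵐ[μ] p) (hq : ∀ᵐ x ∂μ, 0 < q x) (hpi : Integrable p μ)
  (hqi : Integrable q μ) (hpp : Integrable (fun x => p x * log (p x)) μ)
  (hpq : Integrable (fun x => p x * log (q x)) μ)
include hp hq hpi hqi hpp hpq

lemma integral_mul_log_sub_add_sub_eq_integral_mul_klFun :
    ∫ x, p x * log (p x) ∂μ - ∫ x, p x * log (q x) ∂μ
        + (∫ x, q x ∂μ - ∫ x, p x ∂μ) = ∫ x, q x * klFun (p x / q x) ∂μ := by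
  rw [← integral_sub hpp hpq, ← integral_sub hqi hpi,
    ← integral_add (by exact hpp.sub hpq) (by exact hqi.sub hpi)]
  exact integral_congr_ae (mul_klFun_div_ae_eq hp hq)

theorem integral_mul_log_le_integral_mul_log (hmass : ∫ x, q x ∂μ ≤ ∫ x, p x ∂μ) :
    ∫ x, p x * log (q x) ∂μ ≤ ∫ x, p x * log (p x) ∂μ := by
  have hgap := integral_mul_log_sub_add_sub_eq_integral_mul_klFun hp hq hpi hqi hpp hpq
  have := integral_nonneg_of_ae (mul_klFun_div_ae_nonneg hp hq)
  linarith

theorem ae_eq_of_integral_mul_log_eq (hmass : ∫ x, q x ∂μ = ∫ x, p x ∂μ)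
    (h : ∫ x, p x * log (p x) ∂μ = ∫ x, p x * log (q x) ∂μ) : p =ᵐ[μ] q := by
  have hgap := integral_mul_log_sub_add_sub_eq_integral_mul_klFun hp hq hpi hqi hpp hpq
  have hint : Integrable (fun x => q x * klFun (p x / q x)) μ :=
    ((hpp.sub hpq).add (hqi.sub hpi)).congr (mul_klFun_div_ae_eq hp hq)
  have hzero : (fun x => q x * klFun (p x / q x)) =ᵐ[μ] 0 :=
    (integral_eq_zero_iff_of_nonneg_ae (mul_klFun_div_ae_nonneg hp hq) hint).1 (by linarith)
  filter_upwards [hzero, hp, hq] with x hx hpx hqx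
  have hkl := (mul_eq_zero.1 hx).resolve_left hqx.ne'
  rwa [klFun_eq_zero_iff (div_nonneg hpx hqx.le), div_eq_one_iff_eq hqx.ne'] at hkl

end Gibbs

lemma integral_log_div_self {a b : ℝ} (ha : 0 < a) (hb : 0 < b) :
    ∫ x in a..b, log x / x = (log b ^ 2 - log a ^ 2) / 2 := by
  have hne : ∀ x ∈ Set.uIcc a b, x ≠ 0 := fun x hx =>
    ((lt_min ha hb).trans_le hx.1).ne'
  rw [intervalIntegral.integral_eq_sub_of_hasDerivAt (f := fun x => log x ^ 2 / 2)]
  · ring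
  · intro x hx
    refine (((hasDerivAt_log (hne x hx)).pow 2).div_const 2).congr_deriv ?_
    simp [field]
  · exact ((continuousOn_log.mono hne).div continuousOn_id hne).intervalIntegrable

noncomputable def benfordDensity (b x : ℝ) : ℝ := 1 / (x * log b)

lemma log_benfordDensity {b x : ℝ} (hx : x ≠ 0) (hb : log b ≠ 0) :
    log (benfordDensity b x) = -log x - log (log b) := by
  rw [benfordDensity, one_div, log_inv, log_mul hx hb]
  ring

lemma continuousOn_benfordDensity {b : ℝ} {s : Set ℝ} (hs : ∀ x ∈ s, x ≠ 0)
    (hb : log b ≠ 0) : ContinuousOn (benfordDensity b) s :=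
  continuousOn_const.div (continuousOn_id.mul continuousOn_const) fun x hx =>
    mul_ne_zero (hs x hx) hb

lemma integral_benfordDensity {b : ℝ} (hb₀ : 0 < b) (hb₁ : b ≠ 1) :
    ∫ x in (1 : ℝ)..b, benfordDensity b x = 1 := by
  have hL : log b ≠ 0 := log_ne_zero_of_pos_of_ne_one hb₀ hb₁
  simp only [benfordDensity, ← div_div]
  rw [intervalIntegral.integral_div, integral_one_div (Set.notMem_uIcc_of_lt one_pos hb₀),
    div_one, div_self hL]

lemma neg_integral_benfordDensity_mul_log {b : ℝ} (hb₀ : 0 < b) (hb₁ : b ≠ 1) :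
    -∫ x in (1 : ℝ)..b, benfordDensity b x * log (benfordDensity b x) =
      log (log b) + 1 / 2 * log b := by
  have hL : log b ≠ 0 := log_ne_zero_of_pos_of_ne_one hb₀ hb₁
  have hne : ∀ x ∈ Set.uIcc 1 b, x ≠ 0 := fun x hx =>
    ((lt_min one_pos hb₀).trans_le hx.1).ne'
  have hsplit : ∀ x ∈ Set.uIcc 1 b, benfordDensity b x * log (benfordDensity b x) =
      -(log x / x) / log b - log (log b) * benfordDensity b x := by
    intro x hx
    rw [log_benfordDensity (hne x hx) hL, benfordDensity]
    field_simp
  rw [intervalIntegral.integral_congr hsplit, intervalIntegral.integral_sub,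
    intervalIntegral.integral_div, intervalIntegral.integral_neg,
    intervalIntegral.integral_const_mul, integral_log_div_self one_pos hb₀,
    integral_benfordDensity hb₀ hb₁]
  · rw [log_one]
    field_simp
    ring
  · exact ((continuousOn_log.mono hne).div continuousOn_id hne).neg.div_const _
      |>.intervalIntegrable
  · exact (continuousOn_const.mul (continuousOn_benfordDensity hne hL)).intervalIntegrable

lemma benfordDensity_pos {b x : ℝ} (hb : 1 < b) (hx : 0 < x) : 0 < benfordDensity b x :=
  one_div_pos.2 (mul_pos hx (log_pos hb))

section CrossEntropy

variable {μ : Measure ℝ} {b : ℝ} {ρ : ℝ → ℝ}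

lemma mul_log_benfordDensity_ae_eq (hμ : ∀ᵐ x ∂μ, x ≠ 0) (hb : log b ≠ 0) :
    (fun x => ρ x * log (benfordDensity b x)) =ᵐ[μ]
      fun x => -(ρ x * log x + log (log b) * ρ x) := by
  filter_upwards [hμ] with x hx
  rw [log_benfordDensity hx hb]
  ring

variable (hμ : ∀ᵐ x ∂μ, x ≠ 0) (hb : log b ≠ 0) (hρi : Integrable ρ μ)
  (hρlog : Integrable (fun x => ρ x * log x) μ)
include hμ hb hρi hρlog

lemma integrable_mul_log_benfordDensity :
    Integrable (fun x => ρ x * log (benfordDensity b x)) μ :=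
  (hρlog.add (hρi.const_mul _)).neg.congr (mul_log_benfordDensity_ae_eq hμ hb).symm

lemma integral_mul_log_benfordDensity :
    ∫ x, ρ x * log (benfordDensity b x) ∂μ =
      -(∫ x, ρ x * log x ∂μ + log (log b) * ∫ x, ρ x ∂μ) := by
  rw [integral_congr_ae (mul_log_benfordDensity_ae_eq hμ hb), integral_neg,
    integral_add hρlog (hρi.const_mul _), integral_const_mul]

end CrossEntropy

section MaxEntropy

variable {μ : Measure ℝ} {b : ℝ} {ρ : ℝ → ℝ} (hμ : ∀ᵐ x ∂μ, 0 < x) (hb : 1 < b)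
  (hρ : 0 ≤ᵐ[μ] ρ) (hρi : Integrable ρ μ) (hqi : Integrable (benfordDensity b) μ)
  (hρρ : Integrable (fun x => ρ x * log (ρ x)) μ)
  (hρlog : Integrable (fun x => ρ x * log x) μ)
include hμ hb hρ hρi hqi hρρ hρlog

theorem neg_integral_mul_log_le_integral_mul_log_add_log_log
    (hmass : ∫ x, benfordDensity b x ∂μ ≤ ∫ x, ρ x ∂μ) :
    -∫ x, ρ x * log (ρ x) ∂μ ≤
      ∫ x, ρ x * log x ∂μ + log (log b) * ∫ x, ρ x ∂μ := by
  have hμ₀ : ∀ᵐ x ∂μ, x ≠ 0 := hμ.mono fun x hx => hx.ne'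
  have hgibbs := integral_mul_log_le_integral_mul_log hρ (hμ.mono fun x => benfordDensity_pos hb)
    hρi hqi hρρ (integrable_mul_log_benfordDensity hμ₀ (log_pos hb).ne' hρi hρlog) hmass
  rw [integral_mul_log_benfordDensity hμ₀ (log_pos hb).ne' hρi hρlog] at hgibbs
  linarith

theorem ae_eq_benfordDensity_of_neg_integral_mul_log_eq
    (hmass : ∫ x, benfordDensity b x ∂μ = ∫ x, ρ x ∂μ)
    (h : -∫ x, ρ x * log (ρ x) ∂μ =
      ∫ x, ρ x * log x ∂μ + log (log b) * ∫ x, ρ x ∂μ) :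
    ρ =ᵐ[μ] benfordDensity b := by
  have hμ₀ : ∀ᵐ x ∂μ, x ≠ 0 := hμ.mono fun x hx => hx.ne'
  refine ae_eq_of_integral_mul_log_eq hρ (hμ.mono fun x => benfordDensity_pos hb)
    hρi hqi hρρ (integrable_mul_log_benfordDensity hμ₀ (log_pos hb).ne' hρi hρlog) hmass ?_
  rw [integral_mul_log_benfordDensity hμ₀ (log_pos hb).ne' hρi hρlog]
  linarith

end MaxEntropy

theorem benford_max_entropy (b : ℝ) (hb : 1 < b) (ρ : ℝ → ℝ)
    (hρ : ∀ x ∈ Set.Ico (1 : ℝ) b, 0 ≤ ρ x)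
    (h1 : ∫ x in (1 : ℝ)..b, ρ x = 1)
    (hi1 : IntegrableOn (fun x => ρ x * Real.log (ρ x)) (Set.Ico 1 b))
    (hi2 : IntegrableOn (fun x => ρ x * Real.log x) (Set.Ico 1 b))
    (hconstraint : ∫ x in (1 : ℝ)..b, ρ x * Real.log x ≤ (1 / 2) * Real.log b) :
    (-∫ x in (1 : ℝ)..b, ρ x * Real.log (ρ x) ≤
        Real.log (Real.log b) + (1 / 2) * Real.log b) ∧
    (-∫ x in (1 : ℝ)..b, (1 / (x * Real.log b)) * Real.log (1 / (x * Real.log b)) =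
        Real.log (Real.log b) + (1 / 2) * Real.log b) ∧
    ((-∫ x in (1 : ℝ)..b, ρ x * Real.log (ρ x) =
        Real.log (Real.log b) + (1 / 2) * Real.log b) →
      ∀ᵐ x ∂(volume.restrict (Set.Ico (1 : ℝ) b)), ρ x = 1 / (x * Real.log b)) := by
  have hb₀ : 0 < b := one_pos.trans hb
  have hq1 := integral_benfordDensity hb₀ hb.ne'
  have hIco (f : ℝ → ℝ) : ∫ x in (1 : ℝ)..b, f x = ∫ x in Set.Ico 1 b, f x := by
    rw [intervalIntegral.integral_of_le hb.le, integral_Ico_eq_integral_Ioc]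
  have integrableOn_of_integral_eq_one {f : ℝ → ℝ} (hf : ∫ x in (1 : ℝ)..b, f x = 1) :
      IntegrableOn f (Set.Ico 1 b) :=
    (intervalIntegrable_iff_integrableOn_Ico_of_le hb.le).1
      (intervalIntegral.intervalIntegrable_of_integral_ne_zero (by rw [hf]; exact one_ne_zero))
  have hμ : ∀ᵐ x ∂(volume.restrict (Set.Ico (1 : ℝ) b)), 0 < x :=
    ae_restrict_of_forall_mem measurableSet_Ico fun x hx => one_pos.trans_le hx.1
  have hρ₀ : 0 ≤ᵐ[volume.restrict (Set.Ico 1 b)] ρ :=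
    ae_restrict_of_forall_mem measurableSet_Ico hρ
  have hρi := integrableOn_of_integral_eq_one h1
  have hqi := integrableOn_of_integral_eq_one hq1
  rw [hIco] at h1 hconstraint hq1
  have hmass : ∫ x in Set.Ico 1 b, benfordDensity b x = ∫ x in Set.Ico 1 b, ρ x :=
    hq1.trans h1.symm
  have hbound :=
    neg_integral_mul_log_le_integral_mul_log_add_log_log hμ hb hρ₀ hρi hqi hi1 hi2 hmass.le
  rw [h1, mul_one] at hbound
  refine ⟨?_, neg_integral_benfordDensity_mul_log hb₀ hb.ne', fun heq => ?_⟩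
  · rw [hIco]
    linarith
  · rw [hIco] at heq
    refine ae_eq_benfordDensity_of_neg_integral_mul_log_eq hμ hb hρ₀ hρi hqi hi1 hi2 hmass ?_
    rw [h1]
    linarith
end

section
/- For any λ > 0, if X has the Newcomb–Benford distribution on [1, b) (cdf ln x / ln b), then the significand of λX in base b (i.e., λX reduced by the appropriate power of b into [1, b)) again has the Newcomb–Benford distribution. -/
/-!
Under `x = b ^ t` the Newcomb–Benford law on `[1, b)` is the uniform law on `[0, 1)`, and
multiplication by `λ` followed by reduction to `[1, b)` becomes the rotation
`t ↦ fract (t + log_b λ)` of the unit interval, which preserves Lebesgue measure.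
-/

open MeasureTheory Set

theorem Real.measurable_logb (b : ℝ) : Measurable (Real.logb b) :=
  Real.measurable_log.div_const _

theorem map_add_const_volume_restrict_Ico (a b c : ℝ) :
    (volume.restrict (Ico a b)).map (· + c) = volume.restrict (Ico (a + c) (b + c)) := by
  have h := Measure.restrict_map (μ := volume) (measurable_add_const c)
    (measurableSet_Ico (a := a + c) (b := b + c))
  rwa [(measurePreserving_add_right volume c).map_eq, preimage_add_const_Ico,
    add_sub_cancel_right, add_sub_cancel_right, eq_comm] at h

theorem map_fract_volume_restrict_Ico_of_subset {a b : ℝ} (n : ℤ) (ha : (n : ℝ) ≤ a)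
    (hb : b ≤ n + 1) :
    (volume.restrict (Ico a b)).map Int.fract = volume.restrict (Ico (a - n) (b - n)) := by
  have hfract : Int.fract =ᵐ[volume.restrict (Ico a b)] (· + -(n : ℝ)) := by
    filter_upwards [ae_restrict_mem measurableSet_Ico] with t ht
    rw [Int.fract_eq_iff]
    exact ⟨by linarith [ht.1], by linarith [ht.2], n, by ring⟩
  rw [Measure.map_congr hfract, map_add_const_volume_restrict_Ico, ← sub_eq_add_neg,
    ← sub_eq_add_neg]

theorem map_fract_volume_restrict_Ico_add_one (a : ℝ) :
    (volume.restrict (Ico a (a + 1))).map Int.fract = volume.restrict (Ico 0 1) := by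
  set n := ⌈a⌉
  have han : a ≤ n := Int.le_ceil a
  have hna : (n : ℝ) < a + 1 := Int.ceil_lt_add_one a
  have hlow : (volume.restrict (Ico a (n : ℝ))).map Int.fract =
      volume.restrict (Ico (a + 1 - n) 1) := by
    convert map_fract_volume_restrict_Ico_of_subset (a := a) (b := n) (n - 1)
      (by push_cast; linarith) (by push_cast; linarith) using 3 <;> push_cast <;> ring
  have hhigh : (volume.restrict (Ico (n : ℝ) (a + 1))).map Int.fract =
      volume.restrict (Ico 0 (a + 1 - n)) := by
    rw [map_fract_volume_restrict_Ico_of_subset n le_rfl (by linarith), sub_self]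
  rw [← Ico_union_Ico_eq_Ico han hna.le,
    Measure.restrict_union Ico_disjoint_Ico_same measurableSet_Ico,
    Measure.map_add _ _ measurable_fract, hlow, hhigh, add_comm,
    ← Measure.restrict_union Ico_disjoint_Ico_same measurableSet_Ico,
    Ico_union_Ico_eq_Ico (by linarith) (by linarith)]

theorem map_fract_add_volume_restrict_Ico (c : ℝ) :
    (volume.restrict (Ico 0 1)).map (fun t => Int.fract (t + c)) =
      volume.restrict (Ico 0 1) := by
  rw [← Function.comp_def Int.fract,
    ← Measure.map_map measurable_fract (measurable_add_const c),
    map_add_const_volume_restrict_Ico, zero_add, add_comm 1 c,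
    map_fract_volume_restrict_Ico_add_one]

noncomputable def benfordMeasure (b : ℝ) : Measure ℝ :=
  (volume.restrict (Ico 1 b)).withDensity fun x => ENNReal.ofReal (1 / (x * Real.log b))

noncomputable def significand (b x : ℝ) : ℝ :=
  x / b ^ ⌊Real.logb b x⌋

theorem measurable_significand (b : ℝ) : Measurable (significand b) :=
  measurable_id.div (measurable_from_top.comp (Int.measurable_floor.comp (Real.measurable_logb b)))

section

variable {b : ℝ}

theorem Real.logb_image_Ico_one_self (hb : 1 < b) : Real.logb b '' Ico 1 b = Ico 0 1 := by
  have hb0 : 0 < b := one_pos.trans hb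
  ext y
  constructor
  · rintro ⟨x, hx, rfl⟩
    refine ⟨Real.logb_nonneg hb hx.1, ?_⟩
    calc Real.logb b x < Real.logb b b := Real.logb_lt_logb hb (one_pos.trans_le hx.1) hx.2
      _ = 1 := Real.logb_self_eq_one hb
  · intro hy
    refine ⟨b ^ y, ⟨?_, ?_⟩, Real.logb_rpow hb0 hb.ne'⟩
    · simpa using (Real.rpow_le_rpow_left_iff hb).mpr hy.1
    · simpa using (Real.rpow_lt_rpow_left_iff hb).mpr hy.2

theorem map_logb_benfordMeasure (hb : 1 < b) :
    (benfordMeasure b).map (Real.logb b) = volume.restrict (Ico 0 1) := by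
  have hlogb : 0 < Real.log b := Real.log_pos hb
  have hderiv : ∀ x ∈ Ico 1 b, HasFDerivWithinAt (Real.logb b)
      ((1 : ℝ →L[ℝ] ℝ).smulRight (1 / (x * Real.log b))) (Ico 1 b) x := by
    intro x hx
    have h := (Real.hasDerivAt_log (one_pos.trans_le hx.1).ne').div_const (Real.log b)
    rw [show x⁻¹ / Real.log b = 1 / (x * Real.log b) by ring] at h
    exact (hasDerivAt_iff_hasFDerivAt.mp h).hasFDerivWithinAt
  have hinj : InjOn (Real.logb b) (Ico 1 b) :=
    (Real.logb_injOn_pos hb).mono fun x hx => one_pos.trans_le hx.1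
  rw [← Real.logb_image_Ico_one_self hb, ← map_withDensity_abs_det_fderiv_eq_addHaar volume
    measurableSet_Ico.nullMeasurableSet hderiv hinj, benfordMeasure]
  congr 1
  refine withDensity_congr_ae ?_
  filter_upwards [ae_restrict_mem measurableSet_Ico] with x hx
  rw [ContinuousLinearMap.smulRight_one_eq_toSpanSingleton,
    ContinuousLinearMap.det_toSpanSingleton,
    abs_of_pos (one_div_pos.mpr (mul_pos (one_pos.trans_le hx.1) hlogb))]

theorem map_rpow_volume_restrict_Ico (hb : 1 < b) :
    (volume.restrict (Ico 0 1)).map (fun t : ℝ => b ^ t) = benfordMeasure b := by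
  have hrpow_logb : (fun t : ℝ => b ^ t) ∘ Real.logb b =ᵐ[benfordMeasure b] id := by
    have hac : benfordMeasure b ≪ volume.restrict (Ico 1 b) :=
      withDensity_absolutelyContinuous _ _
    filter_upwards [hac.ae_le (ae_restrict_mem measurableSet_Ico)] with x hx
    exact Real.rpow_logb (one_pos.trans hb) hb.ne' (one_pos.trans_le hx.1)
  rw [← map_logb_benfordMeasure hb, Measure.map_map (by fun_prop) (Real.measurable_logb b),
    Measure.map_congr hrpow_logb, Measure.map_id]

theorem significand_mul_rpow (hb : 1 < b) {l : ℝ} (hl : 0 < l) (t : ℝ) :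
    significand b (l * b ^ t) = b ^ Int.fract (t + Real.logb b l) := by
  have hb0 : 0 < b := one_pos.trans hb
  rw [significand, ← Real.rpow_logb hb0 hb.ne' hl, ← Real.rpow_add hb0,
    Real.rpow_logb hb0 hb.ne' hl, Real.logb_rpow hb0 hb.ne', ← Real.rpow_intCast,
    ← Real.rpow_sub hb0, Int.self_sub_floor, add_comm]

end

theorem benford_scale_invariance (b : ℝ) (hb : 1 < b)
    (μ : Measure ℝ)
    (hμ : μ = (volume.restrict (Set.Ico 1 b)).withDensity
      (fun x => ENNReal.ofReal (1 / (x * Real.log b))))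
    (l : ℝ) (hl : 0 < l) :
    Measure.map (fun x => l * x / (b : ℝ) ^ (⌊Real.logb b (l * x)⌋ : ℤ)) μ = μ := by
  subst hμ
  change (benfordMeasure b).map (fun x => significand b (l * x)) = benfordMeasure b
  have hconj : (fun x => significand b (l * x)) ∘ (fun t : ℝ => b ^ t) =
      (fun t : ℝ => b ^ t) ∘ fun t => Int.fract (t + Real.logb b l) :=
    funext (significand_mul_rpow hb hl)
  have hscale : Measurable fun x => significand b (l * x) :=
    (measurable_significand b).comp (measurable_const_mul l)
  have hrot : Measurable fun t => Int.fract (t + Real.logb b l) :=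
    measurable_fract.comp (measurable_add_const _)
  rw [← map_rpow_volume_restrict_Ico hb, Measure.map_map hscale (by fun_prop), hconj,
    ← Measure.map_map (by fun_prop) hrot, map_fract_add_volume_restrict_Ico]
end
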